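/- arXiv:2101.01045 — 2 statements merged into one kernel-verified Lean document; each statement's English description precedes it below -/
import Mathlib

section
/- Consider the SG method: fix ε > 0 and x⁽⁰⁾ ∈ ℝⁿ, and for k = 0, 1, …, K set x⁽ᵏ⁺¹⁾ = x⁽ᵏ⁾ − (ε/‖g₀(x⁽ᵏ⁾)‖₂²) g₀(x⁽ᵏ⁾) if f̄(x⁽ᵏ⁾) ≤ ε, and x⁽ᵏ⁺¹⁾ = x⁽ᵏ⁾ − (f̄(x⁽ᵏ⁾)/‖ḡ(x⁽ᵏ⁾)‖₂²) ḡ(x⁽ᵏ⁾) otherwise. Assume ‖x⁽⁰⁾ − x*‖₂ ≤ R and that the chosen subgradients satisfy 0 < ‖g₀(x)‖₂ ≤ M and 0 < ‖ḡ(x)‖₂ ≤ M for all x with ‖x − x*‖₂ ≤ R. Then there exists a constant C > 0 depending only on M and R such that for every ε > 0 and every natural number K with K ≥ C·ε⁻², the set I_ε(K) := {k ∈ {0,…,K} : f̄(x⁽ᵏ⁾) ≤ ε} is nonempty and p_ε⁽ᴷ⁾ := min_{k ∈ I_ε(K)} f₀(x⁽ᵏ⁾) satisfies p_ε⁽ᴷ⁾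 ≤ p* + ε. -/
open scoped RealInnerProductSpace
open Matrix

/-- `A x` for `A` an `l × n` real matrix and `x ∈ ℝⁿ`, as Euclidean spaces. -/
noncomputable def mulVecE {l n : ℕ} (A : Matrix (Fin l) (Fin n) ℝ)
    (x : EuclideanSpace ℝ (Fin n)) : EuclideanSpace ℝ (Fin l) :=
  Matrix.toEuclideanLin A x

/-- SG complexity: if `K ≥ C ε⁻²` (with `C` depending only on the subgradient
bound `M` and the radius `R`), then `I_ε(K) = {k ≤ K : f̄(x⁽ᵏ⁾) ≤ ε}` is nonempty
and `min_{k ∈ I_ε(K)} f₀(x⁽ᵏ⁾) ≤ p* + ε`. -/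
theorem sg_complexity
    (n m l : ℕ)
    (f0 : EuclideanSpace ℝ (Fin n) → ℝ)
    (f : Fin m → EuclideanSpace ℝ (Fin n) → ℝ)
    (hf0 : ConvexOn ℝ Set.univ f0)
    (hf : ∀ i, ConvexOn ℝ Set.univ (f i))
    (A : Matrix (Fin l) (Fin n) ℝ) (b : EuclideanSpace ℝ (Fin l))
    -- f̄(x) = max{f₁(x), …, f_m(x), |a₁ᵀx - b₁|, …, |a_lᵀx - b_l|}
    (hne : (Finset.univ : Finset (Fin m ⊕ Fin l)).Nonempty)
    (fbar : EuclideanSpace ℝ (Fin n) → ℝ)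
    (hfbar : ∀ x, fbar x = Finset.univ.sup' hne
      (Sum.elim (fun i => f i x) (fun j => |mulVecE A x j - b j|)))
    -- x* is an optimal solution with value p*
    (pstar : ℝ) (xstar : EuclideanSpace ℝ (Fin n))
    (hxfeas : ∀ i, f i xstar ≤ 0) (hxeq : mulVecE A xstar = b)
    (hxval : f0 xstar = pstar)
    (hxopt : ∀ x, (∀ i, f i x ≤ 0) → mulVecE A x = b → pstar ≤ f0 x)
    -- fixed subgradient selections g₀(x) ∈ ∂f₀(x) and ḡ(x) ∈ ∂f̄(x)
    (g0 gbar : EuclideanSpace ℝ (Fin n) → EuclideanSpace ℝ (Fin n))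
    (hg0 : ∀ x y, ⟪g0 x, y - x⟫ ≤ f0 y - f0 x)
    (hgbar : ∀ x y, ⟪gbar x, y - x⟫ ≤ fbar y - fbar x)
    -- the subgradients are nonzero and bounded by M on the ball of radius R around x*
    (M R : ℝ) (hM : 0 < M) (hR : 0 < R)
    (hgb : ∀ x : EuclideanSpace ℝ (Fin n), ‖x - xstar‖ ≤ R →
      (0 < ‖g0 x‖ ∧ ‖g0 x‖ ≤ M) ∧ (0 < ‖gbar x‖ ∧ ‖gbar x‖ ≤ M)) :
    ∃ C : ℝ, 0 < C ∧
      ∀ ε : ℝ, 0 < ε →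
      ∀ x : ℕ → EuclideanSpace ℝ (Fin n), ‖x 0 - xstar‖ ≤ R →
      (∀ k : ℕ, x (k + 1) =
        if fbar (x k) ≤ ε then
          x k - (ε / ‖g0 (x k)‖ ^ 2) • g0 (x k)
        else
          x k - (fbar (x k) / ‖gbar (x k)‖ ^ 2) • gbar (x k)) →
      ∀ K : ℕ, C / ε ^ 2 ≤ (K : ℝ) →
        ∃ k ≤ K, fbar (x k) ≤ ε ∧ f0 (x k) ≤ pstar + ε := by

  refine ⟨M ^ 2 * R ^ 2, by positivity, ?_⟩
  intro ε hε x hx0 hrec K hK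
  by_contra hcon
  push_neg at hcon
  -- fbar at xstar is nonpositive
  have hfbarstar : fbar xstar ≤ 0 := by
    rw [hfbar]
    apply Finset.sup'_le
    rintro (i | j) -
    · exact hxfeas i
    · simp [hxeq]
  -- one-step decrease lemma
  have step : ∀ k : ℕ, ‖x k - xstar‖ ≤ R →
      (fbar (x k) ≤ ε → pstar + ε < f0 (x k)) →
      ‖x (k + 1) - xstar‖ ^ 2 ≤ ‖x k - xstar‖ ^ 2 - ε ^ 2 / M ^ 2 := by
    intro k hkR hbad
    obtain ⟨⟨hg0pos, hg0M⟩, ⟨hgbpos, hgbM⟩⟩ := hgb (x k) hkR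
    rw [hrec k]
    split_ifs with hcase
    · -- objective step
      set g := g0 (x k) with hg
      set s := ‖g‖ with hs
      set c := ε / s ^ 2 with hc
      set u := x k - xstar with hu
      set t := (⟪g, u⟫ : ℝ) with ht
      have hsne : s ≠ 0 := ne_of_gt hg0pos
      have hkey : ε < t := by
        have h1 := hg0 (x k) xstar
        have h2 : xstar - x k = -u := by rw [hu]; abel
        rw [h2, inner_neg_right] at h1
        have h3 := hbad hcase
        rw [hxval] at h1
        simp only [ht]
        linarith
      have hexp : ‖x k - c • g - xstar‖ ^ 2 = ‖u‖ ^ 2 - 2 * (c * t) + c ^ 2 * s ^ 2 := by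
        have : x k - c • g - xstar = u - c • g := by rw [hu]; abel
        rw [this, norm_sub_sq_real, real_inner_smul_right, real_inner_comm, norm_smul]
        simp only [← ht, ← hs, Real.norm_eq_abs, mul_pow, sq_abs]
      rw [hexp]
      have hcpos : 0 < c := div_pos hε (by positivity)
      have e1 : c ^ 2 * s ^ 2 = c * ε := by
        rw [pow_two, mul_assoc, hc, div_mul_cancel₀ _ (by positivity : s ^ 2 ≠ 0)]
      have e2 : c * ε = ε ^ 2 / s ^ 2 := by rw [hc]; ring
      have e3 : ε ^ 2 / M ^ 2 ≤ ε ^ 2 / s ^ 2 :=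
        div_le_div_of_nonneg_left (by positivity) (by positivity)
          (pow_le_pow_left₀ hg0pos.le hg0M 2)
      have e4 : c * ε ≤ c * t := mul_le_mul_of_nonneg_left hkey.le hcpos.le
      linarith
    · -- feasibility step
      set g := gbar (x k) with hg
      set s := ‖g‖ with hs
      set F := fbar (x k) with hF
      set c := F / s ^ 2 with hc
      set u := x k - xstar with hu
      set t := (⟪g, u⟫ : ℝ) with ht
      have hsne : s ≠ 0 := ne_of_gt hgbpos
      have hFε : ε < F := not_le.mp hcase
      have hkey : F ≤ t := by
        have h1 := hgbar (x k) xstar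
        have h2 : xstar - x k = -u := by rw [hu]; abel
        rw [h2, inner_neg_right] at h1
        simp only [ht]
        linarith
      have hexp : ‖x k - c • g - xstar‖ ^ 2 = ‖u‖ ^ 2 - 2 * (c * t) + c ^ 2 * s ^ 2 := by
        have : x k - c • g - xstar = u - c • g := by rw [hu]; abel
        rw [this, norm_sub_sq_real, real_inner_smul_right, real_inner_comm, norm_smul]
        simp only [← ht, ← hs, Real.norm_eq_abs, mul_pow, sq_abs]
      rw [hexp]
      have hFpos : 0 < F := lt_trans hε hFε
      have hcpos : 0 < c := div_pos hFpos (by positivity)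
      have e1 : c ^ 2 * s ^ 2 = c * F := by
        rw [pow_two, mul_assoc, hc, div_mul_cancel₀ _ (by positivity : s ^ 2 ≠ 0)]
      have e2 : c * F = F ^ 2 / s ^ 2 := by rw [hc]; ring
      have e3 : ε ^ 2 / M ^ 2 ≤ F ^ 2 / s ^ 2 :=
        div_le_div₀ (by positivity) (pow_le_pow_left₀ hε.le hFε.le 2) (by positivity)
          (pow_le_pow_left₀ hgbpos.le hgbM 2)
      have e4 : c * F ≤ c * t := mul_le_mul_of_nonneg_left hkey hcpos.le
      linarith
  -- main induction
  have main : ∀ k : ℕ, k ≤ K → ‖x k - xstar‖ ^ 2 ≤ R ^ 2 - k * (ε ^ 2 / M ^ 2) := by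
    intro k
    induction k with
    | zero =>
      intro _
      simpa using pow_le_pow_left₀ (norm_nonneg _) hx0 2
    | succ k ih =>
      intro hk
      have hk' : k ≤ K := Nat.le_of_succ_le hk
      have h1 := ih hk'
      have hkq : (0:ℝ) ≤ (k : ℝ) * (ε ^ 2 / M ^ 2) := by positivity
      have hsq : ‖x k - xstar‖ ^ 2 ≤ R ^ 2 := by linarith
      have hkR : ‖x k - xstar‖ ≤ R := by
        nlinarith [norm_nonneg (x k - xstar), hsq, hR]
      have h2 := step k hkR (hcon k hk')
      push_cast
      linarith
  have hKfin := main K le_rfl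
  have hKq : R ^ 2 ≤ (K : ℝ) * (ε ^ 2 / M ^ 2) := by
    have h := (div_le_iff₀ (by positivity : (0:ℝ) < ε ^ 2)).mp hK
    have e : (K : ℝ) * (ε ^ 2 / M ^ 2) = ((K : ℝ) * ε ^ 2) / M ^ 2 := by ring
    rw [e, le_div_iff₀ (by positivity : (0:ℝ) < M ^ 2)]
    nlinarith
  have hzero : ‖x K - xstar‖ ^ 2 ≤ 0 := by linarith
  have hxK : x K = xstar := by
    have : ‖x K - xstar‖ = 0 := by nlinarith [norm_nonneg (x K - xstar)]
    have := norm_sub_eq_zero_iff.mp this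
    exact this
  have hfb : fbar (x K) ≤ ε := by rw [hxK]; linarith
  have := hcon K le_rfl hfb
  rw [hxK, hxval] at this
  linarith
end

section
/- Consider the DSG method under the saddle-point assumption, with G(z⁽ᵏ⁾) ≠ 0 for all k, and suppose there is C > 0 with ‖G(z⁽ᵏ⁾)‖₂ ≤ C for all k. Then there exists a constant C' > 0 such that for every ε > 0 and every natural number K with K ≥ C'·ε⁻², the averaged iterate x̄⁽ᴷ⁺¹⁾ satisfies ‖F(x̄⁽ᴷ⁺¹⁾)‖₂ + ‖A x̄⁽ᴷ⁺¹⁾ − b‖₂ ≤ ε and f₀(x̄⁽ᴷ⁺¹⁾) ≤ p* + ε. -/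
/-!
DSG is Nesterov's dual averaging run on the Lagrangian's primal-dual subgradient field `G`, with
normalized steps `G(z⁽ᵏ⁾)/‖G(z⁽ᵏ⁾)‖`. The dual-averaging potential `⟪s, z⁽⁰⁾ - z⟫ - ‖s‖²/(2β)`
bounds the weighted regret `∑ₖ ⟪G(z⁽ᵏ⁾), z⁽ᵏ⁾ - z⟫/‖G(z⁽ᵏ⁾)‖` by `β_K (‖z⁽⁰⁾ - z‖² + 1)/2`, since
the step sizes telescope, `∑_{k<K} 1/β_k = β_K - β_0`; and `β_K ≤ 2√(K+1)`. By the subgradient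
inequalities and the saddle point each regret term dominates `L(x⁽ᵏ⁾, λ, ν) - p*`; a subgradient
of `L(·, λ, ν)` at the weighted average `x̄` gives Jensen's inequality, and the weights are at
least `1/C`. Hence `L(x̄, λ, ν) - p* = O(1/√K)` uniformly for `(λ, ν)` in the unit ball around
`(λ*, ν*)`: the choice `λ = λ* + F(x̄)/‖F(x̄)‖`, `ν = ν* + (Ax̄ - b)/‖Ax̄ - b‖` bounds the
infeasibility, and `(λ*, ν*)` itself bounds the objective.
-/

open scoped RealInnerProductSpace
open Matrix

/-- `F(x) = (max{f₁(x),0}, …, max{f_m(x),0})`. -/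
noncomputable def Fplus {n m : ℕ} (f : Fin m → EuclideanSpace ℝ (Fin n) → ℝ)
    (x : EuclideanSpace ℝ (Fin n)) : EuclideanSpace ℝ (Fin m) :=
  (WithLp.equiv 2 (Fin m → ℝ)).symm fun i => max (f i x) 0

/-- The Lagrangian `L(x, λ, ν) = f₀(x) + λᵀF(x) + νᵀ(Ax - b)`. -/
noncomputable def Lag {n m l : ℕ} (f0 : EuclideanSpace ℝ (Fin n) → ℝ)
    (f : Fin m → EuclideanSpace ℝ (Fin n) → ℝ)
    (A : Matrix (Fin l) (Fin n) ℝ) (b : EuclideanSpace ℝ (Fin l))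
    (x : EuclideanSpace ℝ (Fin n)) (lam : EuclideanSpace ℝ (Fin m))
    (nu : EuclideanSpace ℝ (Fin l)) : ℝ :=
  f0 x + ⟪lam, Fplus f x⟫ + ⟪nu, mulVecE A x - b⟫

open Finset

def IsAddInvSeq (β : ℕ → ℝ) : Prop := ∀ k, β (k + 1) = β k + 1 / β k

namespace IsAddInvSeq

variable {β : ℕ → ℝ}

theorem one_le (hβ : IsAddInvSeq β) (h0 : 1 ≤ β 0) (k : ℕ) : 1 ≤ β k := by
  induction k with
  | zero => exact h0
  | succ k ih =>
    rw [hβ k]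
    have : 0 < 1 / β k := by positivity
    linarith

theorem monotone (hβ : IsAddInvSeq β) (h0 : 1 ≤ β 0) : Monotone β :=
  monotone_nat_of_le_succ fun k => by
    have : 0 < 1 / β k := one_div_pos.2 (by linarith [hβ.one_le h0 k])
    linarith [hβ k]

theorem sum_range_inv (hβ : IsAddInvSeq β) (K : ℕ) :
    ∑ k ∈ range K, (β k)⁻¹ = β K - β 0 := by
  rw [← sum_range_sub]
  exact sum_congr rfl fun k _ => by rw [hβ k]; ring

theorem sq_le (hβ : IsAddInvSeq β) (h0 : 1 ≤ β 0) (K : ℕ) : β K ^ 2 ≤ β 0 ^ 2 + 3 * K := by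
  induction K with
  | zero => simp
  | succ K ih =>
    have h1 := hβ.one_le h0 K
    have hinv : (1 / β K) ^ 2 ≤ 1 := by
      rw [div_pow, one_pow, div_le_one (by positivity)]; nlinarith
    have hsq : (β K + 1 / β K) ^ 2 = β K ^ 2 + 2 + (1 / β K) ^ 2 := by
      field_simp; ring
    rw [hβ K, hsq]
    push_cast
    linarith

theorem le_two_mul_sqrt (hβ : IsAddInvSeq β) (h0 : β 0 = 1) (K : ℕ) :
    β K ≤ 2 * √(K + 1) := by
  have h1 := hβ.one_le h0.ge K
  have hsq := hβ.sq_le h0.ge K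
  rw [h0] at hsq
  rw [← div_le_iff₀' two_pos, Real.le_sqrt (by positivity) (by positivity), div_pow]
  linarith

end IsAddInvSeq

section DualAveraging

variable {H : Type*} [NormedAddCommGroup H] [InnerProductSpace ℝ H]

theorem sum_inner_le_of_dualAveraging {u s z : ℕ → H} {b : ℕ → ℝ} {z₀ : H}
    (hb : ∀ k, 0 < b k) (hmono : Monotone b) (hs0 : s 0 = 0)
    (hs : ∀ k, s (k + 1) = s k + u k) (hz : ∀ k, z k = z₀ - (b k)⁻¹ • s k) (w : H)
    (N : ℕ) :
    ∑ k ∈ range N, ⟪u k, z k - w⟫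
      ≤ b N * ‖z₀ - w‖ ^ 2 / 2 + ∑ k ∈ range N, ‖u k‖ ^ 2 / (2 * b k) := by
  have potential : ∀ N, ∑ k ∈ range N, ⟪u k, z k - w⟫
      ≤ ⟪s N, z₀ - w⟫ - ‖s N‖ ^ 2 / (2 * b N) + ∑ k ∈ range N, ‖u k‖ ^ 2 / (2 * b k) := by
    intro N
    induction N with
    | zero => simp [hs0]
    | succ N ih =>
      have hb0 := hb N
      have hstep : ⟪u N, z N - w⟫ = ⟪u N, z₀ - w⟫ - (b N)⁻¹ * ⟪u N, s N⟫ := by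
        rw [hz N, sub_right_comm, inner_sub_right, real_inner_smul_right]
      have hnorm : ‖s (N + 1)‖ ^ 2 = ‖s N‖ ^ 2 + 2 * ⟪u N, s N⟫ + ‖u N‖ ^ 2 := by
        rw [hs N, norm_add_sq_real, real_inner_comm]
      have hnext : ‖s (N + 1)‖ ^ 2 / (2 * b N)
          = ‖s N‖ ^ 2 / (2 * b N) + (b N)⁻¹ * ⟪u N, s N⟫ + ‖u N‖ ^ 2 / (2 * b N) := by
        rw [hnorm]; field_simp
      have hdecay : ‖s (N + 1)‖ ^ 2 / (2 * b (N + 1)) ≤ ‖s (N + 1)‖ ^ 2 / (2 * b N) := by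
        gcongr; exact hmono N.le_succ
      have hinner : ⟪s (N + 1), z₀ - w⟫ = ⟪s N, z₀ - w⟫ + ⟪u N, z₀ - w⟫ := by
        rw [hs N, inner_add_left]
      rw [sum_range_succ, sum_range_succ, hstep, hinner]
      linarith
  calc ∑ k ∈ range N, ⟪u k, z k - w⟫
      ≤ ⟪s N, z₀ - w⟫ - ‖s N‖ ^ 2 / (2 * b N) + ∑ k ∈ range N, ‖u k‖ ^ 2 / (2 * b k) :=
        potential N
    _ ≤ b N * ‖z₀ - w‖ ^ 2 / 2 + ∑ k ∈ range N, ‖u k‖ ^ 2 / (2 * b k) := by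
        have hb0 := hb N
        have hsquare : b N * ‖z₀ - w‖ ^ 2 / 2 - (⟪s N, z₀ - w⟫ - ‖s N‖ ^ 2 / (2 * b N))
            = ‖s N - b N • (z₀ - w)‖ ^ 2 / (2 * b N) := by
          rw [norm_sub_sq_real (s N), norm_smul, real_inner_smul_right, Real.norm_of_nonneg hb0.le]
          field_simp; ring
        have : 0 ≤ ‖s N - b N • (z₀ - w)‖ ^ 2 / (2 * b N) := by positivity
        linarith

end DualAveraging

section Subgradient

variable {H : Type*} [NormedAddCommGroup H] [InnerProductSpace ℝ H]

theorem real_inner_inv_norm_smul_self (x : H) : ⟪‖x‖⁻¹ • x, x⟫ = ‖x‖ := by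
  rcases eq_or_ne x 0 with rfl | hx
  · simp
  · rw [real_inner_smul_left, real_inner_self_eq_norm_sq]
    field_simp

theorem norm_inv_norm_smul_le (x : H) : ‖‖x‖⁻¹ • x‖ ≤ 1 := by
  rcases eq_or_ne x 0 with rfl | hx
  · simp
  · exact (norm_smul_inv_norm hx).le

def IsSubgradientAt (φ : H → ℝ) (v x : H) : Prop := ∀ y, ⟪v, y - x⟫ ≤ φ y - φ x

theorem IsSubgradientAt.sum_mul_le {ι : Type*} {φ : H → ℝ} {v : H} {t : Finset ι}
    {w : ι → ℝ} {p : ι → H} (hφ : IsSubgradientAt φ v (t.centerMass w p))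
    (hw : ∀ i ∈ t, 0 ≤ w i) :
    (∑ i ∈ t, w i) * φ (t.centerMass w p) ≤ ∑ i ∈ t, w i * φ (p i) := by
  set c := t.centerMass w p
  by_cases hw0 : ∑ i ∈ t, w i = 0
  · have hzero : ∀ i ∈ t, w i = 0 := (sum_eq_zero_iff_of_nonneg hw).1 hw0
    rw [hw0, zero_mul, sum_eq_zero fun i hi => by rw [hzero i hi, zero_mul]]
  have hbalance : ∑ i ∈ t, w i • (p i - c) = 0 := by
    simp only [smul_sub, sum_sub_distrib, ← sum_smul, c, Finset.centerMass,
      smul_inv_smul₀ hw0, sub_self]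
  have key : ∑ i ∈ t, w i * ⟪v, p i - c⟫ ≤ ∑ i ∈ t, w i * (φ (p i) - φ c) :=
    sum_le_sum fun i hi => mul_le_mul_of_nonneg_left (hφ (p i)) (hw i hi)
  simp only [← real_inner_smul_right, ← inner_sum, hbalance, inner_zero_right, mul_sub,
    sum_sub_distrib, ← sum_mul] at key
  linarith

theorem IsSubgradientAt.sub_const {φ : H → ℝ} {v x : H} (h : IsSubgradientAt φ v x) (c : ℝ) :
    IsSubgradientAt (fun y => φ y - c) v x := fun y => by
  simpa only [sub_sub_sub_cancel_right] using h y

theorem IsSubgradientAt.le_of_sum_mul_le {φ : H → ℝ} {v : H} {x : ℕ → H} {w : ℕ → ℝ}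
    {C Q : ℝ} {K : ℕ} (hφ : IsSubgradientAt φ v ((range (K + 1)).centerMass w x))
    (hC : 0 < C) (hw : ∀ k, C⁻¹ ≤ w k) (hQ : 0 ≤ Q)
    (hsum : ∑ k ∈ range (K + 1), w k * φ (x k) ≤ √(K + 1) * Q) :
    φ ((range (K + 1)).centerMass w x) ≤ C * Q / √(K + 1) := by
  set a := φ ((range (K + 1)).centerMass w x)
  rcases le_or_gt a 0 with ha | ha
  · exact ha.trans (by positivity)
  have hmass : (K + 1) * C⁻¹ ≤ ∑ k ∈ range (K + 1), w k := by
    simpa using card_nsmul_le_sum (range (K + 1)) w C⁻¹ fun k _ => hw k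
  have hjensen := hφ.sum_mul_le fun k _ => (inv_pos.2 hC).le.trans (hw k)
  have hK : (K + 1) * C⁻¹ * a ≤ √(K + 1) * Q :=
    (mul_le_mul_of_nonneg_right hmass ha.le).trans (hjensen.trans hsum)
  have hs : 0 < √((K : ℝ) + 1) := by positivity
  have hsq : √((K : ℝ) + 1) ^ 2 = K + 1 := Real.sq_sqrt (by positivity)
  rw [le_div_iff₀ hs]
  calc a * √(K + 1) = (K + 1) * C⁻¹ * a * (C / √(K + 1)) := by
        field_simp
        linear_combination hsq
    _ ≤ √(K + 1) * Q * (C / √(K + 1)) := by gcongr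
    _ = C * Q := by field_simp

end Subgradient

theorem norm_sub_sq_le_of_norm_sub_le {E : Type*} [SeminormedAddCommGroup E] {a c y : E} {r : ℝ}
    (h : ‖y - c‖ ≤ r) : ‖a - y‖ ^ 2 ≤ (‖a - c‖ + r) ^ 2 := by
  have := norm_sub_le_norm_sub_add_norm_sub a c y
  rw [norm_sub_rev c y] at this
  gcongr
  linarith

theorem div_sqrt_le_of_sq_div_sq_le {E ε : ℝ} {K : ℕ} (hE : 0 ≤ E) (hε : 0 < ε)
    (hK : E ^ 2 / ε ^ 2 ≤ K) : E / √(K + 1) ≤ ε := by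
  rw [div_le_iff₀ (by positivity), ← div_le_iff₀' hε, Real.le_sqrt (by positivity) (by positivity),
    div_pow]
  linarith

section Triple

variable {E F G : Type*} [NormedAddCommGroup E] [NormedAddCommGroup F] [NormedAddCommGroup G]

def triple (x : E) (y : F) (z : G) : WithLp 2 (WithLp 2 (E × F) × G) :=
  WithLp.toLp 2 (WithLp.toLp 2 (x, y), z)

theorem triple_sub (x x' : E) (y y' : F) (z z' : G) :
    triple x y z - triple x' y' z' = triple (x - x') (y - y') (z - z') := rfl

theorem triple_eq_zero_iff {x : E} {y : F} {z : G} :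
    triple x y z = 0 ↔ x = 0 ∧ y = 0 ∧ z = 0 := by
  simp [triple, and_assoc]

variable [InnerProductSpace ℝ E] [InnerProductSpace ℝ F] [InnerProductSpace ℝ G]

theorem inner_triple (x x' : E) (y y' : F) (z z' : G) :
    ⟪triple x y z, triple x' y' z'⟫ = ⟪x, x'⟫ + ⟪y, y'⟫ + ⟪z, z'⟫ := by
  simp [triple, WithLp.prod_inner_apply]

theorem norm_triple_sq (x : E) (y : F) (z : G) :
    ‖triple x y z‖ ^ 2 = ‖x‖ ^ 2 + ‖y‖ ^ 2 + ‖z‖ ^ 2 := by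
  simp only [← real_inner_self_eq_norm_sq, inner_triple]

theorem norm_triple (x : E) (y : F) (z : G) :
    ‖triple x y z‖ = √(‖x‖ ^ 2 + ‖y‖ ^ 2 + ‖z‖ ^ 2) := by
  rw [← norm_triple_sq, Real.sqrt_sq (norm_nonneg _)]

end Triple

section DSG

variable {H : Type*} [NormedAddCommGroup H] [InnerProductSpace ℝ H]

theorem dsg_regret_le {G s z : ℕ → H} {β : ℕ → ℝ} (hβ : IsAddInvSeq β) (hβ0 : β 0 = 1)
    (hG : ∀ k, G k ≠ 0) (hs0 : s 0 = 0) (hs : ∀ k, s (k + 1) = s k + ‖G k‖⁻¹ • G k)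
    (hz : ∀ k, z (k + 1) = z 0 - (β k)⁻¹ • s (k + 1)) (w : H) (K : ℕ) :
    ∑ k ∈ range (K + 1), ‖G k‖⁻¹ * ⟪G k, z k - w⟫ ≤ √(K + 1) * (‖z 0 - w‖ ^ 2 + 1) := by
  -- `z k` has step size `β (k - 1)`; at `k = 0` the truncated `0 - 1 = 0` is harmless as `s 0 = 0`.
  have hb : ∀ k, 0 < β (k - 1) := fun k => by linarith [hβ.one_le hβ0.ge (k - 1)]
  have hz' : ∀ k, z k = z 0 - (β (k - 1))⁻¹ • s k := by
    rintro (_ | k)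
    · simp [hs0]
    · exact hz k
  have hunit : ∀ k, ‖‖G k‖⁻¹ • G k‖ = 1 := fun k => norm_smul_inv_norm (hG k)
  have hregret := sum_inner_le_of_dualAveraging hb
    ((hβ.monotone hβ0.ge).comp fun _ _ h => Nat.sub_le_sub_right h 1) hs0 hs hz' w (K + 1)
  simp only [hunit, real_inner_smul_left, one_pow, Nat.add_sub_cancel] at hregret
  have hsteps : ∑ k ∈ range (K + 1), 1 / (2 * β (k - 1)) ≤ β K / 2 := by
    rw [sum_range_succ']
    simp only [Nat.add_sub_cancel, Nat.zero_sub, one_div, mul_inv, ← mul_sum, hβ.sum_range_inv]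
    linarith [inv_le_one_of_one_le₀ hβ0.ge]
  have := mul_le_mul_of_nonneg_right (hβ.le_two_mul_sqrt hβ0 K)
    (by positivity : 0 ≤ ‖z 0 - w‖ ^ 2 + 1)
  linarith

theorem dualAveraging_apply_nonneg {ι : Type*} {lam s d : ℕ → EuclideanSpace ℝ ι}
    {c β : ℕ → ℝ} (hc : ∀ k, 0 ≤ c k) (hd : ∀ k i, 0 ≤ d k i) (hβ : ∀ k, 0 < β k)
    (hlam0 : ∀ i, 0 ≤ lam 0 i) (hs0 : s 0 = 0) (hs : ∀ k, s (k + 1) = s k + c k • -d k)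
    (hlam : ∀ k, lam (k + 1) = lam 0 - (β k)⁻¹ • s (k + 1)) (k : ℕ) (i : ι) :
    0 ≤ lam k i := by
  have hs_nonpos : ∀ k, s k i ≤ 0 := by
    intro k
    induction k with
    | zero => simp [hs0]
    | succ k ih =>
      have : 0 ≤ c k * d k i := mul_nonneg (hc k) (hd k i)
      simp only [hs k, PiLp.add_apply, PiLp.smul_apply, PiLp.neg_apply, smul_eq_mul]
      linarith
  cases k with
  | zero => exact hlam0 i
  | succ k =>
    have : (β k)⁻¹ * s (k + 1) i ≤ 0 :=
      mul_nonpos_of_nonneg_of_nonpos (inv_pos.2 (hβ k)).le (hs_nonpos _)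
    simp only [hlam k, PiLp.sub_apply, PiLp.smul_apply, smul_eq_mul]
    linarith [hlam0 i]

end DSG

section Lagrangian

variable {n m l : ℕ} {f0 : EuclideanSpace ℝ (Fin n) → ℝ}
  {f : Fin m → EuclideanSpace ℝ (Fin n) → ℝ} {A : Matrix (Fin l) (Fin n) ℝ}
  {b : EuclideanSpace ℝ (Fin l)}

theorem Fplus_nonneg (x : EuclideanSpace ℝ (Fin n)) (i : Fin m) : 0 ≤ Fplus f x i :=
  le_max_right _ _

theorem inner_Fplus (lam : EuclideanSpace ℝ (Fin m)) (x : EuclideanSpace ℝ (Fin n)) :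
    ⟪lam, Fplus f x⟫ = ∑ i, lam i * max (f i x) 0 := by
  simp [PiLp.inner_apply, Fplus, mul_comm]

theorem inner_mulVecE_transpose (ν : EuclideanSpace ℝ (Fin l)) (y : EuclideanSpace ℝ (Fin n)) :
    ⟪mulVecE Aᵀ ν, y⟫ = ⟪ν, mulVecE A y⟫ := by
  rw [mulVecE, mulVecE, ← Matrix.conjTranspose_eq_transpose_of_trivial,
    Matrix.toEuclideanLin_conjTranspose_eq_adjoint, LinearMap.adjoint_inner_left]

theorem isSubgradientAt_Lag {x v₀ : EuclideanSpace ℝ (Fin n)}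
    {v : Fin m → EuclideanSpace ℝ (Fin n)} {lam : EuclideanSpace ℝ (Fin m)}
    (h₀ : IsSubgradientAt f0 v₀ x) (h : ∀ i, IsSubgradientAt (fun y => max (f i y) 0) (v i) x)
    (hlam : ∀ i, 0 ≤ lam i) (nu : EuclideanSpace ℝ (Fin l)) :
    IsSubgradientAt (fun y => Lag f0 f A b y lam nu) (v₀ + ∑ i, lam i • v i + mulVecE Aᵀ nu) x := by
  intro y
  have hF : ∑ i, lam i * ⟪v i, y - x⟫ ≤ ⟪lam, Fplus f y⟫ - ⟪lam, Fplus f x⟫ := by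
    rw [inner_Fplus, inner_Fplus, ← sum_sub_distrib]
    exact sum_le_sum fun i _ => by rw [← mul_sub]; exact mul_le_mul_of_nonneg_left (h i y) (hlam i)
  have hlin : ⟪mulVecE Aᵀ nu, y - x⟫ = ⟪nu, mulVecE A y - b⟫ - ⟪nu, mulVecE A x - b⟫ := by
    rw [inner_mulVecE_transpose, mulVecE, map_sub, ← inner_sub_right, sub_sub_sub_cancel_right]
    rfl
  simp only [Lag, inner_add_left, sum_inner, real_inner_smul_left]
  linarith [h₀ y]

theorem Lag_sub_Lag_le_inner {x x' v : EuclideanSpace ℝ (Fin n)}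
    {lam lam' : EuclideanSpace ℝ (Fin m)} {nu nu' : EuclideanSpace ℝ (Fin l)}
    (hv : IsSubgradientAt (fun y => Lag f0 f A b y lam' nu') v x') :
    Lag f0 f A b x' lam nu - Lag f0 f A b x lam' nu'
      ≤ ⟪triple v (-Fplus f x') (-(mulVecE A x' - b)), triple x' lam' nu' - triple x lam nu⟫ := by
  have hx : ⟪v, x - x'⟫ ≤ Lag f0 f A b x lam' nu' - Lag f0 f A b x' lam' nu' := hv x
  rw [triple_sub, inner_triple, ← neg_sub x x', inner_neg_right, inner_neg_left, inner_neg_left,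
    real_inner_comm _ (Fplus f x'), real_inner_comm _ (mulVecE A x' - b), inner_sub_left,
    inner_sub_left]
  simp only [Lag] at hx ⊢
  linarith

theorem Lag_add_add (x : EuclideanSpace ℝ (Fin n)) (lam u : EuclideanSpace ℝ (Fin m))
    (nu v : EuclideanSpace ℝ (Fin l)) :
    Lag f0 f A b x (lam + u) (nu + v)
      = Lag f0 f A b x lam nu + ⟪u, Fplus f x⟫ + ⟪v, mulVecE A x - b⟫ := by
  simp only [Lag, inner_add_left]
  ring

theorem feasible_and_optimal_of_Lag_sub_le {x : EuclideanSpace ℝ (Fin n)} {p B : ℝ}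
    {lamstar : EuclideanSpace ℝ (Fin m)} {nustar : EuclideanSpace ℝ (Fin l)}
    (hlamstar : ∀ i, 0 ≤ lamstar i) (hsaddle : p ≤ Lag f0 f A b x lamstar nustar)
    (h : ∀ lam nu, (∀ i, 0 ≤ lam i) → ‖lam - lamstar‖ ≤ 1 → ‖nu - nustar‖ ≤ 1 →
      Lag f0 f A b x lam nu - p ≤ B) :
    ‖Fplus f x‖ + ‖mulVecE A x - b‖ ≤ B ∧ f0 x ≤ p + (1 + ‖nustar‖) * B := by
  have hfeas : ‖Fplus f x‖ + ‖mulVecE A x - b‖ ≤ B := by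
    have hdir : ∀ i, 0 ≤ (lamstar + ‖Fplus f x‖⁻¹ • Fplus f x) i := fun i =>
      add_nonneg (hlamstar i) (mul_nonneg (inv_nonneg.2 (norm_nonneg _)) (Fplus_nonneg x i))
    have := h _ (nustar + ‖mulVecE A x - b‖⁻¹ • (mulVecE A x - b)) hdir
      (by simpa using norm_inv_norm_smul_le (Fplus f x))
      (by simpa using norm_inv_norm_smul_le (mulVecE A x - b))
    rw [Lag_add_add, real_inner_inv_norm_smul_self, real_inner_inv_norm_smul_self] at this
    linarith
  refine ⟨hfeas, ?_⟩
  have hlamF : 0 ≤ ⟪lamstar, Fplus f x⟫ := by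
    rw [inner_Fplus]
    exact sum_nonneg fun i _ => mul_nonneg (hlamstar i) (le_max_right _ _)
  have hnu : -⟪nustar, mulVecE A x - b⟫ ≤ ‖nustar‖ * B :=
    (neg_le_abs _).trans <| (abs_real_inner_le_norm _ _).trans <| by
      gcongr; linarith [norm_nonneg (Fplus f x)]
  have := h lamstar nustar hlamstar (by simp) (by simp)
  simp only [Lag] at this
  linarith

theorem complexity_of_Lag_sub_le {xbar : ℕ → EuclideanSpace ℝ (Fin n)}
    {lam₀ lamstar : EuclideanSpace ℝ (Fin m)} {nu₀ nustar : EuclideanSpace ℝ (Fin l)}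
    {p C D : ℝ} (hC : 0 < C) (hD : 0 ≤ D) (hlamstar : ∀ i, 0 ≤ lamstar i)
    (hsaddle : ∀ x, p ≤ Lag f0 f A b x lamstar nustar)
    (h : ∀ (K : ℕ) lam nu, (∀ i, 0 ≤ lam i) → Lag f0 f A b (xbar (K + 1)) lam nu - p
      ≤ C * (D + ‖lam₀ - lam‖ ^ 2 + ‖nu₀ - nu‖ ^ 2) / √(K + 1)) :
    ∃ C' : ℝ, 0 < C' ∧ ∀ ε : ℝ, 0 < ε → ∀ K : ℕ, C' / ε ^ 2 ≤ (K : ℝ) →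
      ‖Fplus f (xbar (K + 1))‖ + ‖mulVecE A (xbar (K + 1)) - b‖ ≤ ε ∧
      f0 (xbar (K + 1)) ≤ p + ε := by
  set R := D + (‖lam₀ - lamstar‖ + 1) ^ 2 + (‖nu₀ - nustar‖ + 1) ^ 2
  refine ⟨((1 + ‖nustar‖) * (C * R)) ^ 2, by positivity, fun ε hε K hK => ?_⟩
  obtain ⟨hfeas, hopt⟩ := feasible_and_optimal_of_Lag_sub_le (B := C * R / √(K + 1))
    hlamstar (hsaddle _) fun lam nu hlam hl hn => (h K lam nu hlam).trans <| by
      have hR : D + ‖lam₀ - lam‖ ^ 2 + ‖nu₀ - nu‖ ^ 2 ≤ R :=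
        add_le_add (add_le_add le_rfl (norm_sub_sq_le_of_norm_sub_le hl))
          (norm_sub_sq_le_of_norm_sub_le hn)
      gcongr
  have hε' := div_sqrt_le_of_sq_div_sq_le (by positivity) hε hK
  have hB : 0 ≤ C * R / √(K + 1) := by positivity
  rw [mul_div_assoc] at hε'
  constructor <;> nlinarith [norm_nonneg nustar]

end Lagrangian

theorem dsg_complexity_general
    (n m l : ℕ)
    (f0 : EuclideanSpace ℝ (Fin n) → ℝ)
    (f : Fin m → EuclideanSpace ℝ (Fin n) → ℝ)
    (A : Matrix (Fin l) (Fin n) ℝ) (b : EuclideanSpace ℝ (Fin l))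
    (pstar : ℝ)
    (xstar : EuclideanSpace ℝ (Fin n))
    (lamstar : EuclideanSpace ℝ (Fin m)) (nustar : EuclideanSpace ℝ (Fin l))
    -- saddle-point assumption
    (hlamstar : ∀ i, 0 ≤ lamstar i)
    (hsaddle1 : ∀ (lam : EuclideanSpace ℝ (Fin m)) (nu : EuclideanSpace ℝ (Fin l)),
      (∀ i, 0 ≤ lam i) → Lag f0 f A b xstar lam nu ≤ pstar)
    (hsaddle2 : ∀ x, pstar ≤ Lag f0 f A b x lamstar nustar)
    -- fixed subgradient selections g₀(x) ∈ ∂f₀(x), gᵢ(x) ∈ ∂Fᵢ(x)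
    (g0 : EuclideanSpace ℝ (Fin n) → EuclideanSpace ℝ (Fin n))
    (hg0 : ∀ x y, ⟪g0 x, y - x⟫ ≤ f0 y - f0 x)
    (g : Fin m → EuclideanSpace ℝ (Fin n) → EuclideanSpace ℝ (Fin n))
    (hg : ∀ i x y, ⟪g i x, y - x⟫ ≤ max (f i y) 0 - max (f i x) 0)
    -- the DSG iterates z⁽ᵏ⁾ = (x⁽ᵏ⁾, λ⁽ᵏ⁾, ν⁽ᵏ⁾)
    (xk : ℕ → EuclideanSpace ℝ (Fin n))
    (lamk : ℕ → EuclideanSpace ℝ (Fin m))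
    (nuk : ℕ → EuclideanSpace ℝ (Fin l))
    (hlam0 : ∀ i, 0 ≤ lamk 0 i)
    -- G(z⁽ᵏ⁾): primal component Gx k and total Euclidean norm nG k
    (Gx : ℕ → EuclideanSpace ℝ (Fin n))
    (hGx : ∀ k, Gx k
      = g0 (xk k) + (∑ i, lamk k i • g i (xk k)) + mulVecE Aᵀ (nuk k))
    (nG : ℕ → ℝ)
    (hnG : ∀ k, nG k = Real.sqrt (‖Gx k‖ ^ 2 + ‖Fplus f (xk k)‖ ^ 2
      + ‖mulVecE A (xk k) - b‖ ^ 2))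
    -- G(z⁽ᵏ⁾) ≠ 0
    (hGne : ∀ k, ¬ (Gx k = 0 ∧ Fplus f (xk k) = 0 ∧ mulVecE A (xk k) - b = 0))
    -- the averaging sequences s⁽ᵏ⁾ and weights β
    (sx : ℕ → EuclideanSpace ℝ (Fin n))
    (slam : ℕ → EuclideanSpace ℝ (Fin m))
    (snu : ℕ → EuclideanSpace ℝ (Fin l))
    (hs0 : sx 0 = 0 ∧ slam 0 = 0 ∧ snu 0 = 0)
    (hsx : ∀ k, sx (k + 1) = sx k + (nG k)⁻¹ • Gx k)
    (hslam : ∀ k, slam (k + 1) = slam k + (nG k)⁻¹ • (-(Fplus f (xk k))))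
    (hsnu : ∀ k, snu (k + 1) = snu k + (nG k)⁻¹ • (-(mulVecE A (xk k) - b)))
    (β : ℕ → ℝ) (hβ0 : β 0 = 1) (hβ : ∀ k, β (k + 1) = β k + 1 / β k)
    (hxk : ∀ k, xk (k + 1) = xk 0 - (β k)⁻¹ • sx (k + 1))
    (hlamk : ∀ k, lamk (k + 1) = lamk 0 - (β k)⁻¹ • slam (k + 1))
    (hnuk : ∀ k, nuk (k + 1) = nuk 0 - (β k)⁻¹ • snu (k + 1))
    -- a uniform bound on ‖G(z⁽ᵏ⁾)‖₂
    (C : ℝ) (hC : 0 < C) (hCb : ∀ k, nG k ≤ C)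
    -- the averaged primal iterate x̄⁽ᴷ⁺¹⁾
    (xbar : ℕ → EuclideanSpace ℝ (Fin n))
    (hxbar : ∀ K : ℕ, xbar (K + 1)
      = (∑ k ∈ Finset.range (K + 1), (nG k)⁻¹)⁻¹ •
          ∑ k ∈ Finset.range (K + 1), (nG k)⁻¹ • xk k) :
    ∃ C' : ℝ, 0 < C' ∧ ∀ ε : ℝ, 0 < ε → ∀ K : ℕ, C' / ε ^ 2 ≤ (K : ℝ) →
      ‖Fplus f (xbar (K + 1))‖ + ‖mulVecE A (xbar (K + 1)) - b‖ ≤ ε ∧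
      f0 (xbar (K + 1)) ≤ pstar + ε := by
  obtain ⟨hsx0, hslam0, hsnu0⟩ := hs0
  have hβ' : IsAddInvSeq β := hβ
  set z := fun k => triple (xk k) (lamk k) (nuk k)
  set G := fun k => triple (Gx k) (-Fplus f (xk k)) (-(mulVecE A (xk k) - b))
  have hGnorm : ∀ k, ‖G k‖ = nG k := fun k => by
    rw [hnG k, norm_triple, norm_neg, norm_neg]
  have hG0 : ∀ k, G k ≠ 0 := fun k => by
    simpa only [G, ne_eq, triple_eq_zero_iff, neg_eq_zero] using hGne k
  have hlamk_nonneg : ∀ k i, 0 ≤ lamk k i := dualAveraging_apply_nonneg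
    (fun k => by rw [hnG k]; positivity) (fun k => Fplus_nonneg (xk k))
    (fun k => by linarith [hβ'.one_le hβ0.ge k]) hlam0 hslam0 hslam hlamk
  have hregret := dsg_regret_le (G := G) (s := fun k => triple (sx k) (slam k) (snu k)) (z := z)
    hβ' hβ0 hG0 (by simp only [hsx0, hslam0, hsnu0]; rfl)
    (fun k => by simp only [hGnorm, hsx k, hslam k, hsnu k]; rfl)
    (fun k => by simp only [z, hxk k, hlamk k, hnuk k]; rfl)
  have hgap : ∀ k lam nu, Lag f0 f A b (xk k) lam nu - pstar
      ≤ ⟪G k, z k - triple xstar lam nu⟫ := fun k lam nu => by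
    have := Lag_sub_Lag_le_inner (x := xstar) (lam := lam) (nu := nu)
      (isSubgradientAt_Lag (A := A) (b := b) (hg0 (xk k)) (fun i => hg i (xk k))
        (hlamk_nonneg k) (nuk k))
    rw [← hGx k] at this
    simp only [G, z]
    linarith [hsaddle1 (lamk k) (nuk k) (hlamk_nonneg k)]
  refine complexity_of_Lag_sub_le (lam₀ := lamk 0) (nu₀ := nuk 0) (D := ‖xk 0 - xstar‖ ^ 2 + 1)
    hC (by positivity) hlamstar hsaddle2 fun K lam nu hlam => ?_
  rw [hxbar K]
  refine IsSubgradientAt.le_of_sum_mul_le (x := xk) (w := fun k => (nG k)⁻¹)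
    ((isSubgradientAt_Lag (A := A) (b := b) (hg0 _) (fun i => hg i _) hlam nu).sub_const pstar)
    hC (fun k => inv_anti₀ (by rw [← hGnorm k]; exact norm_pos_iff.2 (hG0 k)) (hCb k))
    (by positivity) ?_
  calc ∑ k ∈ range (K + 1), (nG k)⁻¹ * (Lag f0 f A b (xk k) lam nu - pstar)
      ≤ ∑ k ∈ range (K + 1), ‖G k‖⁻¹ * ⟪G k, z k - triple xstar lam nu⟫ :=
        sum_le_sum fun k _ => by
          rw [hGnorm]
          exact mul_le_mul_of_nonneg_left (hgap k lam nu) (by rw [hnG k]; positivity)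
    _ ≤ √(K + 1) * (‖z 0 - triple xstar lam nu‖ ^ 2 + 1) := hregret _ K
    _ = √(K + 1) * (‖xk 0 - xstar‖ ^ 2 + 1 + ‖lamk 0 - lam‖ ^ 2 + ‖nuk 0 - nu‖ ^ 2) := by
        rw [triple_sub, norm_triple_sq]; ring

/-- DSG main theorem: `O(ε⁻²)` complexity of the dual subgradient method. -/
theorem dsg_complexity
    (n m l : ℕ)
    (f0 : EuclideanSpace ℝ (Fin n) → ℝ)
    (f : Fin m → EuclideanSpace ℝ (Fin n) → ℝ)
    (hf0 : ConvexOn ℝ Set.univ f0)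
    (hf : ∀ i, ConvexOn ℝ Set.univ (f i))
    (A : Matrix (Fin l) (Fin n) ℝ) (b : EuclideanSpace ℝ (Fin l))
    (pstar : ℝ)
    (xstar : EuclideanSpace ℝ (Fin n))
    (lamstar : EuclideanSpace ℝ (Fin m)) (nustar : EuclideanSpace ℝ (Fin l))
    -- x* is primal optimal with value p*
    (hxfeas : ∀ i, f i xstar ≤ 0) (hxeq : mulVecE A xstar = b)
    (hxval : f0 xstar = pstar)
    -- saddle-point assumption
    (hlamstar : ∀ i, 0 ≤ lamstar i)
    (hsaddle_eq : Lag f0 f A b xstar lamstar nustar = pstar)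
    (hsaddle1 : ∀ (lam : EuclideanSpace ℝ (Fin m)) (nu : EuclideanSpace ℝ (Fin l)),
      (∀ i, 0 ≤ lam i) → Lag f0 f A b xstar lam nu ≤ pstar)
    (hsaddle2 : ∀ x, pstar ≤ Lag f0 f A b x lamstar nustar)
    -- fixed subgradient selections g₀(x) ∈ ∂f₀(x), gᵢ(x) ∈ ∂Fᵢ(x)
    (g0 : EuclideanSpace ℝ (Fin n) → EuclideanSpace ℝ (Fin n))
    (hg0 : ∀ x y, ⟪g0 x, y - x⟫ ≤ f0 y - f0 x)
    (g : Fin m → EuclideanSpace ℝ (Fin n) → EuclideanSpace ℝ (Fin n))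
    (hg : ∀ i x y, ⟪g i x, y - x⟫ ≤ max (f i y) 0 - max (f i x) 0)
    -- the DSG iterates z⁽ᵏ⁾ = (x⁽ᵏ⁾, λ⁽ᵏ⁾, ν⁽ᵏ⁾)
    (xk : ℕ → EuclideanSpace ℝ (Fin n))
    (lamk : ℕ → EuclideanSpace ℝ (Fin m))
    (nuk : ℕ → EuclideanSpace ℝ (Fin l))
    (hlam0 : ∀ i, 0 ≤ lamk 0 i)
    -- G(z⁽ᵏ⁾): primal component Gx k and total Euclidean norm nG k
    (Gx : ℕ → EuclideanSpace ℝ (Fin n))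
    (hGx : ∀ k, Gx k
      = g0 (xk k) + (∑ i, lamk k i • g i (xk k)) + mulVecE Aᵀ (nuk k))
    (nG : ℕ → ℝ)
    (hnG : ∀ k, nG k = Real.sqrt (‖Gx k‖ ^ 2 + ‖Fplus f (xk k)‖ ^ 2
      + ‖mulVecE A (xk k) - b‖ ^ 2))
    -- G(z⁽ᵏ⁾) ≠ 0
    (hGne : ∀ k, ¬ (Gx k = 0 ∧ Fplus f (xk k) = 0 ∧ mulVecE A (xk k) - b = 0))
    -- the averaging sequences s⁽ᵏ⁾ and weights β
    (sx : ℕ → EuclideanSpace ℝ (Fin n))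
    (slam : ℕ → EuclideanSpace ℝ (Fin m))
    (snu : ℕ → EuclideanSpace ℝ (Fin l))
    (hs0 : sx 0 = 0 ∧ slam 0 = 0 ∧ snu 0 = 0)
    (hsx : ∀ k, sx (k + 1) = sx k + (nG k)⁻¹ • Gx k)
    (hslam : ∀ k, slam (k + 1) = slam k + (nG k)⁻¹ • (-(Fplus f (xk k))))
    (hsnu : ∀ k, snu (k + 1) = snu k + (nG k)⁻¹ • (-(mulVecE A (xk k) - b)))
    (β : ℕ → ℝ) (hβ0 : β 0 = 1) (hβ : ∀ k, β (k + 1) = β k + 1 / β k)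
    (hxk : ∀ k, xk (k + 1) = xk 0 - (β k)⁻¹ • sx (k + 1))
    (hlamk : ∀ k, lamk (k + 1) = lamk 0 - (β k)⁻¹ • slam (k + 1))
    (hnuk : ∀ k, nuk (k + 1) = nuk 0 - (β k)⁻¹ • snu (k + 1))
    -- a uniform bound on ‖G(z⁽ᵏ⁾)‖₂
    (C : ℝ) (hC : 0 < C) (hCb : ∀ k, nG k ≤ C)
    -- the averaged primal iterate x̄⁽ᴷ⁺¹⁾
    (xbar : ℕ → EuclideanSpace ℝ (Fin n))
    (hxbar : ∀ K : ℕ, xbar (K + 1)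
      = (∑ k ∈ Finset.range (K + 1), (nG k)⁻¹)⁻¹ •
          ∑ k ∈ Finset.range (K + 1), (nG k)⁻¹ • xk k) :
    ∃ C' : ℝ, 0 < C' ∧ ∀ ε : ℝ, 0 < ε → ∀ K : ℕ, C' / ε ^ 2 ≤ (K : ℝ) →
      ‖Fplus f (xbar (K + 1))‖ + ‖mulVecE A (xbar (K + 1)) - b‖ ≤ ε ∧
      f0 (xbar (K + 1)) ≤ pstar + ε :=
  dsg_complexity_general n m l f0 f A b pstar xstar lamstar nustar hlamstar hsaddle1 hsaddle2 g0 hg0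
    g hg xk lamk nuk hlam0 Gx hGx nG hnG hGne sx slam snu hs0 hsx hslam hsnu β hβ0 hβ hxk hlamk hnuk
    C hC hCb xbar hxbar
end
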